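/- For any rotation matrix R ∈ SO(3), ‖vex(P_a(R))‖² = 4(1 - ‖R‖_I)‖R‖_I, where ‖R‖_I = (1/4)Tr(I₃ - R) is the normalized Euclidean distance and P_a(R) = (R - Rᵀ)/2. -/
import Mathlib


open Matrix Real Filter

noncomputable section

/-- Hat map: skew-symmetric matrix of a vector. -/
def hat (b : Fin 3 → ℝ) : Matrix (Fin 3) (Fin 3) ℝ :=
  !![0, -b 2, b 1; b 2, 0, -b 0; -b 1, b 0, 0]

/-- Inverse of the hat map on skew-symmetric matrices. -/
def vex (M : Matrix (Fin 3) (Fin 3) ℝ) : Fin 3 → ℝ := ![M 2 1, M 0 2, M 1 0]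

/-- Anti-symmetric projection. -/
def Pa (M : Matrix (Fin 3) (Fin 3) ℝ) : Matrix (Fin 3) (Fin 3) ℝ := (1/2 : ℝ) • (M - Mᵀ)

/-- Normalized Euclidean distance. -/
def normI (R : Matrix (Fin 3) (Fin 3) ℝ) : ℝ := (1/4) * Matrix.trace (1 - R)

/-- Membership in the special orthogonal group SO(3). -/
def SO3 (R : Matrix (Fin 3) (Fin 3) ℝ) : Prop := Rᵀ * R = 1 ∧ R.det = 1

/-- Rodriguez map. -/
def rod (ρ : Fin 3 → ℝ) : Matrix (Fin 3) (Fin 3) ℝ :=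
  (1/(1 + ρ ⬝ᵥ ρ)) • ((1 - ρ ⬝ᵥ ρ) • (1 : Matrix (Fin 3) (Fin 3) ℝ)
    + (2:ℝ) • Matrix.vecMulVec ρ ρ + (2:ℝ) • hat ρ)

/-- A vector as a 3×1 column matrix. -/
def colMat (P : Fin 3 → ℝ) : Matrix (Fin 3) (Fin 1) ℝ := Matrix.of fun i _ => P i

/-- Homogeneous transformation matrix. -/
def homog (R : Matrix (Fin 3) (Fin 3) ℝ) (P : Fin 3 → ℝ) :
    Matrix (Fin 3 ⊕ Fin 1) (Fin 3 ⊕ Fin 1) ℝ :=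
  Matrix.fromBlocks R (colMat P) 0 1

/-- Wedge map on ℝ⁶ (given as two ℝ³ components). -/
def wedge (y₁ y₂ : Fin 3 → ℝ) : Matrix (Fin 3 ⊕ Fin 1) (Fin 3 ⊕ Fin 1) ℝ :=
  Matrix.fromBlocks (hat y₁) (colMat y₂) 0 0

theorem vex_Pa_norm_sq (R : Matrix (Fin 3) (Fin 3) ℝ) (hR : SO3 R) :
    vex (Pa R) ⬝ᵥ vex (Pa R) = 4 * (1 - normI R) * normI R := by
  obtain ⟨ho, hd⟩ := hR
  have hadj : Matrix.adjugate R = Rᵀ := by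
    have h1 : R * Matrix.adjugate R = 1 := by
      rw [Matrix.mul_adjugate, hd, one_smul]
    calc Matrix.adjugate R = (Rᵀ * R) * Matrix.adjugate R := by rw [ho, one_mul]
      _ = Rᵀ * (R * Matrix.adjugate R) := by rw [Matrix.mul_assoc]
      _ = Rᵀ := by rw [h1, Matrix.mul_one]
  have e00 := congrFun (congrFun ho 0) 0
  have e11 := congrFun (congrFun ho 1) 1
  have e22 := congrFun (congrFun ho 2) 2
  have a00 := congrFun (congrFun hadj 0) 0
  have a11 := congrFun (congrFun hadj 1) 1
  have a22 := congrFun (congrFun hadj 2) 2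
  simp [Matrix.mul_apply, Fin.sum_univ_three, Matrix.adjugate_fin_three,
    Matrix.one_apply, Matrix.transpose_apply] at e00 e11 e22 a00 a11 a22
  simp [vex, Pa, normI, Matrix.trace, Matrix.diag, Fin.sum_univ_three,
    dotProduct, Matrix.sub_apply, Matrix.transpose_apply, Matrix.one_apply,
    Matrix.smul_apply]
  linear_combination (1/4) * (e00 + e11 + e22) + (1/2) * (a00 + a11 + a22)
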